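/- If u : ℝ^d → ℝ is a polynomial function of total degree at most 3, then the nonlocal Laplacian agrees exactly with the classical Laplacian: ℒ_δ u(x) = Δu(x) for every x ∈ ℝ^d. (This is the exactness property underlying the paper's consistency tests with linear and cubic data.) -/

import Mathlib

/-!
Restricted to a line through `x`, a cubic `u` is a cubic polynomial in the line parameter, so the
symmetric second difference `u (x + h) + u (x - h) - 2 u x` equals the Hessian form `D²u x (h, h)`
exactly: the odd-order terms cancel and there is no fourth-order term. Since the measure is
translation and reflection invariant, twice the nonlocal Laplacian is the integral of this second
difference against `γ ‖h‖`. The kernel is radial, so invariance under coordinate reflections and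
permutations makes its second-moment matrix a multiple of the identity, and the normalization
fixes that multiple to be `1`; integrating the Hessian form then yields its trace.
-/

open MeasureTheory Polynomial

namespace Polynomial

theorem iteratedDeriv_eval (q : ℝ[X]) (k : ℕ) :
    iteratedDeriv k (fun t => q.eval t) = fun t => (derivative^[k] q).eval t := by
  induction k with
  | zero => simp
  | succ k ih =>
    ext t
    rw [iteratedDeriv_succ, ih, Function.iterate_succ_apply']
    exact Polynomial.deriv _

theorem eval_iterate_derivative_two_zero (q : ℝ[X]) :
    (derivative^[2] q).eval 0 = 2 * q.coeff 2 := by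
  rw [← coeff_zero_eq_eval_zero, coeff_iterate_derivative]
  simp

theorem eval_one_add_eval_neg_one_sub_of_natDegree_le_three {q : ℝ[X]} (hq : q.natDegree ≤ 3) :
    q.eval 1 + q.eval (-1) - 2 * q.eval 0 = 2 * q.coeff 2 := by
  have hlt : q.natDegree < 4 := by omega
  simp only [eval_eq_sum_range' hlt, Finset.sum_range_succ, Finset.sum_range_zero]
  ring

end Polynomial

namespace MvPolynomial

variable {σ R : Type*} [CommSemiring R]

theorem natDegree_aeval_le_totalDegree {f : σ → R[X]} (hf : ∀ i, (f i).natDegree ≤ 1)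
    (p : MvPolynomial σ R) : (aeval f p).natDegree ≤ p.totalDegree := by
  conv_lhs => rw [← p.support_sum_monomial_coeff, map_sum]
  refine natDegree_sum_le_of_forall_le _ _ fun α hα => ?_
  rw [aeval_monomial, Polynomial.algebraMap_eq]
  refine natDegree_C_mul_le _ _ |>.trans <| (natDegree_prod_le _ _).trans <|
    le_trans ?_ (le_totalDegree hα)
  exact Finset.sum_le_sum fun i _ => natDegree_pow_le_of_le _ (hf i) |>.trans (mul_one _).le

theorem eval_aeval_C_mul_X_add_C (p : MvPolynomial σ R) (x v : σ → R) (t : R) :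
    (aeval (fun i => Polynomial.C (v i) * Polynomial.X + Polynomial.C (x i)) p).eval t =
      eval (fun i => x i + t * v i) p := by
  rw [← Polynomial.coe_aeval_eq_eval, comp_aeval_apply]
  simp only [map_add, map_mul, Polynomial.aeval_C, Polynomial.aeval_X, Algebra.algebraMap_self,
    RingHom.id_apply, mul_comm t, add_comm (x _)]
  rfl

end MvPolynomial

theorem ContDiff.iteratedDeriv_comp_add_smul {𝕜 E F : Type*} [NontriviallyNormedField 𝕜]
    [NormedAddCommGroup E] [NormedSpace 𝕜 E] [NormedAddCommGroup F] [NormedSpace 𝕜 F]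
    {f : E → F} {n : ℕ} (hf : ContDiff 𝕜 n f) (x y : E) :
    iteratedDeriv n (fun s : 𝕜 => f (x + s • y)) =
      fun t => iteratedFDeriv 𝕜 n f (x + t • y) (fun _ => y) := by
  induction n with
  | zero => ext t; simp
  | succ n ih =>
    rw [iteratedDeriv_succ, ih (hf.of_le (by norm_cast; omega))]
    exact funext fun t => hf.contDiffAt.deriv_fderiv_add_smul

section SecondDifference

variable {E : Type*} [NormedAddCommGroup E] [NormedSpace ℝ E] {f : E → ℝ} {x h : E} {q : ℝ[X]}

theorem fderiv_fderiv_apply_eq_two_mul_coeff (hf : ContDiff ℝ 2 f)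
    (hq : ∀ t : ℝ, f (x + t • h) = q.eval t) :
    fderiv ℝ (fderiv ℝ f) x h h = 2 * q.coeff 2 := by
  have hline := congrFun (hf.iteratedDeriv_comp_add_smul x h) 0
  simp only [zero_smul, add_zero, iteratedFDeriv_two_apply] at hline
  rw [← hline, funext hq, iteratedDeriv_eval]
  exact eval_iterate_derivative_two_zero q

theorem add_add_sub_eq_fderiv_fderiv_of_natDegree_le_three (hf : ContDiff ℝ 2 f)
    (hq : ∀ t : ℝ, f (x + t • h) = q.eval t) (hdeg : q.natDegree ≤ 3) :
    f (x + h) + f (x - h) - 2 * f x = fderiv ℝ (fderiv ℝ f) x h h := by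
  rw [fderiv_fderiv_apply_eq_two_mul_coeff hf hq,
    ← eval_one_add_eval_neg_one_sub_of_natDegree_le_three hdeg, ← hq, ← hq, ← hq]
  simp [sub_eq_add_neg]

end SecondDifference

section RadialKernel

variable {E : Type*} [NormedAddCommGroup E] [MeasurableSpace E] {μ : Measure E} {γ : ℝ → ℝ}

theorem Continuous.integrable_mul_radial_of_support [ProperSpace E] [OpensMeasurableSpace E]
    {δ : ℝ} (hγ_supp : ∀ r, δ ≤ r → γ r = 0) (hγ_int : Integrable (fun h => γ ‖h‖) μ)
    {g : E → ℝ} (hg : Continuous g) : Integrable (fun h => g h * γ ‖h‖) μ := by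
  refine (integrableOn_iff_integrable_of_support_subset fun h hh => ?_).1
    (hγ_int.integrableOn.continuousOn_mul hg.continuousOn (isCompact_closedBall 0 δ))
  have : γ ‖h‖ ≠ 0 := right_ne_zero_of_mul hh
  simpa using not_le.1 (mt (hγ_supp _) this) |>.le

theorem two_mul_integral_sub_mul_radial [μ.IsAddLeftInvariant] [μ.IsNegInvariant]
    [MeasurableAdd E] [MeasurableNeg E] (f : E → ℝ) (x : E)
    (hf : Integrable (fun h => (f (x + h) - f x) * γ ‖h‖) μ) :
    2 * ∫ y, (f y - f x) * γ ‖y - x‖ ∂μ =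
      ∫ h, (f (x + h) + f (x - h) - 2 * f x) * γ ‖h‖ ∂μ := by
  have htranslate : ∫ y, (f y - f x) * γ ‖y - x‖ ∂μ = ∫ h, (f (x + h) - f x) * γ ‖h‖ ∂μ := by
    simpa using (integral_add_left_eq_self (μ := μ) (fun y => (f y - f x) * γ ‖y - x‖) x).symm
  have hreflect : ∫ h, (f (x + h) - f x) * γ ‖h‖ ∂μ = ∫ h, (f (x - h) - f x) * γ ‖h‖ ∂μ := by
    simpa [sub_eq_add_neg] using (integral_neg_eq_self (fun h => (f (x + h) - f x) * γ ‖h‖) μ).symm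
  have hf' : Integrable (fun h => (f (x - h) - f x) * γ ‖h‖) μ := by
    simpa [sub_eq_add_neg] using hf.comp_neg
  rw [htranslate, two_mul]
  nth_rewrite 2 [hreflect]
  rw [← integral_add hf hf']
  congr 1 with h
  ring

theorem integral_comp_linearIsometryEquiv_mul_radial [InnerProductSpace ℝ E]
    [FiniteDimensional ℝ E] [BorelSpace E] (e : E ≃ₗᵢ[ℝ] E) (γ : ℝ → ℝ) (g : E → ℝ) :
    ∫ h, g (e h) * γ ‖h‖ = ∫ h, g h * γ ‖h‖ := by
  simpa using e.measurePreserving.integral_comp e.toHomeomorph.measurableEmbedding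
    (fun h => g h * γ ‖h‖)

end RadialKernel

namespace EuclideanSpace

variable {ι : Type*} [Fintype ι] [DecidableEq ι]

theorem integral_coord_mul_coord_mul_radial_of_ne (γ : ℝ → ℝ) {i j : ι} (hij : i ≠ j) :
    ∫ h : EuclideanSpace ℝ ι, h i * h j * γ ‖h‖ = 0 := by
  let e := LinearIsometryEquiv.piLpCongrRight (𝕜 := ℝ) 2
    fun k : ι => if k = i then LinearIsometryEquiv.neg ℝ else LinearIsometryEquiv.refl ℝ ℝ
  have hflip := integral_comp_linearIsometryEquiv_mul_radial e γ fun h => h i * h j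
  have he : ∀ h : EuclideanSpace ℝ ι, e h i * e h j = -(h i * h j) := fun h => by
    simp [e, LinearIsometryEquiv.piLpCongrRight_apply, hij.symm]
  simp only [he, neg_mul, integral_neg] at hflip
  linarith

theorem integral_coord_mul_self_mul_radial_eq (γ : ℝ → ℝ) (i j : ι) :
    ∫ h : EuclideanSpace ℝ ι, h i * h i * γ ‖h‖ = ∫ h : EuclideanSpace ℝ ι, h j * h j * γ ‖h‖ := by
  let e := LinearIsometryEquiv.piLpCongrLeft 2 ℝ ℝ (Equiv.swap i j)
  have he : ∀ h : EuclideanSpace ℝ ι, e h i = h j := fun h => by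
    simp [e, LinearIsometryEquiv.piLpCongrLeft_apply]
  simpa [he] using (integral_comp_linearIsometryEquiv_mul_radial e γ fun h => h i * h i).symm

theorem apply_self_eq_sum_coord_mul_coord
    (B : EuclideanSpace ℝ ι →L[ℝ] EuclideanSpace ℝ ι →L[ℝ] ℝ) (h : EuclideanSpace ℝ ι) :
    B h h = ∑ i, ∑ j, B (single i 1) (single j 1) * (h i * h j) := by
  conv_lhs => rw [← (EuclideanSpace.basisFun ι ℝ).sum_repr h]
  simp only [map_sum, map_smul, FunLike.coe_sum, Finset.sum_apply, FunLike.coe_smul,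
    Pi.smul_apply, smul_eq_mul, basisFun_apply, basisFun_repr, Finset.mul_sum]
  rw [Finset.sum_comm]
  exact Finset.sum_congr rfl fun i _ => Finset.sum_congr rfl fun j _ => by ring

variable {γ : ℝ → ℝ} {δ : ℝ} (hγ_supp : ∀ r, δ ≤ r → γ r = 0)
  (hγ_int : Integrable fun h : EuclideanSpace ℝ ι => γ ‖h‖)
include hγ_supp hγ_int

theorem integral_coord_mul_self_mul_radial (i : ι) :
    ∫ h : EuclideanSpace ℝ ι, h i * h i * γ ‖h‖ =
      (∫ h : EuclideanSpace ℝ ι, γ ‖h‖ * ‖h‖ ^ 2) / Fintype.card ι := by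
  have hcard : (Fintype.card ι : ℝ) ≠ 0 := Nat.cast_ne_zero.2 (Fintype.card_pos_iff.2 ⟨i⟩).ne'
  have hsum : ∫ h : EuclideanSpace ℝ ι, γ ‖h‖ * ‖h‖ ^ 2 =
      ∑ k, ∫ h : EuclideanSpace ℝ ι, h k * h k * γ ‖h‖ := by
    rw [← integral_finsetSum _ fun k _ => Continuous.integrable_mul_radial_of_support hγ_supp
      hγ_int (g := fun h : EuclideanSpace ℝ ι => h k * h k) (by fun_prop)]
    congr 1 with h
    rw [EuclideanSpace.norm_sq_eq, Finset.mul_sum]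
    exact Finset.sum_congr rfl fun k _ => by rw [Real.norm_eq_abs, sq_abs]; ring
  rw [hsum, Finset.sum_congr rfl fun k _ => integral_coord_mul_self_mul_radial_eq γ k i]
  field_simp
  simp only [Finset.sum_const, Finset.card_univ, nsmul_eq_mul]
  ring

theorem integral_apply_self_mul_radial
    (B : EuclideanSpace ℝ ι →L[ℝ] EuclideanSpace ℝ ι →L[ℝ] ℝ) :
    ∫ h : EuclideanSpace ℝ ι, B h h * γ ‖h‖ =
      ∑ i, B (single i 1) (single i 1) *
        ((∫ h : EuclideanSpace ℝ ι, γ ‖h‖ * ‖h‖ ^ 2) / Fintype.card ι) := by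
  have hint : ∀ i j : ι, Integrable fun h : EuclideanSpace ℝ ι => h i * h j * γ ‖h‖ :=
    fun i j => Continuous.integrable_mul_radial_of_support hγ_supp hγ_int
      (g := fun h : EuclideanSpace ℝ ι => h i * h j) (by fun_prop)
  calc ∫ h : EuclideanSpace ℝ ι, B h h * γ ‖h‖
      = ∫ h : EuclideanSpace ℝ ι, ∑ i, ∑ j, B (single i 1) (single j 1) * (h i * h j * γ ‖h‖) := by
        congr 1 with h
        simp only [apply_self_eq_sum_coord_mul_coord B h, Finset.sum_mul, mul_assoc]
    _ = ∑ i, ∑ j, B (single i 1) (single j 1) * ∫ h : EuclideanSpace ℝ ι, h i * h j * γ ‖h‖ := by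
        rw [integral_finsetSum _ fun i _ =>
          integrable_finsetSum _ fun j _ => (hint i j).const_mul _]
        refine Finset.sum_congr rfl fun i _ => ?_
        rw [integral_finsetSum _ fun j _ => (hint i j).const_mul _]
        simp only [integral_const_mul]
    _ = _ := by
        refine Finset.sum_congr rfl fun i _ => Finset.sum_eq_single i (fun j _ hji => ?_) (by simp)
          |>.trans ?_
        · rw [integral_coord_mul_coord_mul_radial_of_ne γ hji.symm, mul_zero]
        · rw [integral_coord_mul_self_mul_radial hγ_supp hγ_int]

end EuclideanSpace

theorem nonlocal_laplacian_exact_on_cubics_general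
    (d : ℕ) (δ : ℝ)
    (γ : ℝ → ℝ)
    (hγ_supp : ∀ r, δ ≤ r → γ r = 0)
    (hγ_int : Integrable (fun h : EuclideanSpace ℝ (Fin d) => γ ‖h‖))
    (hγ_norm : (∫ h : EuclideanSpace ℝ (Fin d), γ ‖h‖ * ‖h‖ ^ 2) = (d : ℝ))
    (u : EuclideanSpace ℝ (Fin d) → ℝ)
    (p : MvPolynomial (Fin d) ℝ) (hp : p.totalDegree ≤ 3)
    (hup : ∀ x : EuclideanSpace ℝ (Fin d), u x = MvPolynomial.eval (fun i => x i) p)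
    (x : EuclideanSpace ℝ (Fin d)) :
    2 * ∫ y, (u y - u x) * γ ‖y - x‖ =
      ∑ i : Fin d, iteratedFDeriv ℝ 2 u x
        ![EuclideanSpace.single i 1, EuclideanSpace.single i 1] := by
  have hu : ContDiff ℝ 2 u := by
    have hpoly :=
      AnalyticOnNhd.eval_continuousLinearMap' (fun i => EuclideanSpace.proj (𝕜 := ℝ) i) p
    rw [funext hup]
    exact hpoly.contDiff
  have hsecond (h : EuclideanSpace ℝ (Fin d)) :
      u (x + h) + u (x - h) - 2 * u x = fderiv ℝ (fderiv ℝ u) x h h :=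
    add_add_sub_eq_fderiv_fderiv_of_natDegree_le_three hu
      (q := MvPolynomial.aeval (fun i => C (h i) * X + C (x i)) p)
      (fun t => by simp [hup, MvPolynomial.eval_aeval_C_mul_X_add_C])
      ((MvPolynomial.natDegree_aeval_le_totalDegree (fun _ => natDegree_linear_le) p).trans hp)
  have hint : Integrable fun h : EuclideanSpace ℝ (Fin d) => (u (x + h) - u x) * γ ‖h‖ :=
    Continuous.integrable_mul_radial_of_support hγ_supp hγ_int (by fun_prop)
  rw [two_mul_integral_sub_mul_radial u x hint]
  simp_rw [hsecond, EuclideanSpace.integral_apply_self_mul_radial hγ_supp hγ_int, hγ_norm,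
    Fintype.card_fin]
  refine Finset.sum_congr rfl fun i _ => ?_
  rw [div_self (Nat.cast_ne_zero.2 i.pos.ne'), mul_one, iteratedFDeriv_two_apply]
  rfl

/-- Exactness of the nonlocal Laplacian on polynomials of total degree at most 3:
the nonlocal Laplacian agrees with the classical Laplacian (trace of the Hessian). -/
theorem nonlocal_laplacian_exact_on_cubics
    (d : ℕ) (hd : 1 ≤ d) (δ : ℝ) (hδ : 0 < δ)
    (γ : ℝ → ℝ) (hγ_meas : Measurable γ) (hγ_nonneg : ∀ r, 0 ≤ γ r)
    (hγ_supp : ∀ r, δ ≤ r → γ r = 0)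
    (hγ_int : Integrable (fun h : EuclideanSpace ℝ (Fin d) => γ ‖h‖))
    (hγ_norm : (∫ h : EuclideanSpace ℝ (Fin d), γ ‖h‖ * ‖h‖ ^ 2) = (d : ℝ))
    (u : EuclideanSpace ℝ (Fin d) → ℝ)
    (p : MvPolynomial (Fin d) ℝ) (hp : p.totalDegree ≤ 3)
    (hup : ∀ x : EuclideanSpace ℝ (Fin d), u x = MvPolynomial.eval (fun i => x i) p)
    (x : EuclideanSpace ℝ (Fin d)) :
    2 * ∫ y, (u y - u x) * γ ‖y - x‖ =
      ∑ i : Fin d, iteratedFDeriv ℝ 2 u x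
        ![EuclideanSpace.single i 1, EuclideanSpace.single i 1] :=
  nonlocal_laplacian_exact_on_cubics_general d δ γ hγ_supp hγ_int hγ_norm u p hp hup x
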